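/- arXiv:1309.2759 — 6 statements merged into one kernel-verified Lean document; each statement's English description precedes it below -/
import Mathlib

section
/- Let 0 < q < 1 and define the Jackson integral J[f](x) = (1−q) \sum_{n≥0} f(q^n x) q^n x (assuming absolute convergence). Then for functions f, g: J[f]·J[g] + (1−q)·J[M_{id}[f·g]] = J[J[f]·g + f·J[g]], where M_{id}[h](x) = x·h(x). -/
/-!
Write `aₙ = f(qⁿx)qⁿx` and `bₙ = g(qⁿx)qⁿx`, so that `J[f](x) = (1-q) ∑ aₙ` and
`J[f](qⁿx) = (1-q) ∑ₘ aₘ₊ₙ`. Then `J[f]·J[g]` is `(1-q)²` times the sum of `aᵢbⱼ` over the whole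
quadrant, `J[M_id[f·g]]` is `(1-q)` times its diagonal sum, and `J[J[f]·g + f·J[g]]` is `(1-q)²`
times the sum over the two closed half-quadrants `i ≥ j` and `i ≤ j`, which cover the quadrant
and overlap exactly on the diagonal.
-/

/-- The Jackson integral `J[f](x) = (1−q) ∑_{n≥0} f(qⁿx) qⁿ x`. -/
noncomputable def jackson (q : ℝ) (f : ℝ → ℝ) (x : ℝ) : ℝ :=
  (1 - q) * ∑' n : ℕ, f (q ^ n * x) * (q ^ n * x)

open Function Set

theorem range_shift_fst_eq_setOf_le :
    range (fun p : ℕ × ℕ => (p.2 + p.1, p.1)) = {p | p.2 ≤ p.1} := by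
  ext ⟨i, j⟩
  simp only [mem_range, Prod.exists, Prod.mk.injEq, mem_ofPred_eq]
  constructor
  · rintro ⟨n, m, rfl, rfl⟩
    omega
  · exact fun h => ⟨j, i - j, by omega, rfl⟩

theorem range_shift_snd_eq_setOf_le :
    range (fun p : ℕ × ℕ => (p.1, p.2 + p.1)) = {p | p.1 ≤ p.2} := by
  ext ⟨i, j⟩
  simp only [mem_range, Prod.exists, Prod.mk.injEq, mem_ofPred_eq]
  constructor
  · rintro ⟨n, m, rfl, rfl⟩
    omega
  · exact fun h => ⟨i, j - i, rfl, by omega⟩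

theorem setOf_le_inter_setOf_le_eq_range_diag :
    {p : ℕ × ℕ | p.2 ≤ p.1} ∩ {p | p.1 ≤ p.2} = range (fun n => (n, n)) := by
  ext ⟨i, j⟩
  simp only [mem_inter_iff, mem_ofPred_eq, mem_range, Prod.mk.injEq]
  constructor
  · intro h
    exact ⟨i, rfl, by omega⟩
  · rintro ⟨n, rfl, rfl⟩
    exact ⟨le_rfl, le_rfl⟩

theorem tsum_comp_eq_tsum_indicator_range {α β γ : Type*} [AddCommMonoid α] [TopologicalSpace α]
    {g : γ → β} (hg : Injective g) (f : β → α) :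
    ∑' c, f (g c) = ∑' b, (range g).indicator f b := by
  rw [← tsum_range f hg, tsum_subtype]

section DoubleSeries

variable {α : Type*} [AddCommGroup α] [UniformSpace α] [IsUniformAddGroup α] [CompleteSpace α]
  [T2Space α]

theorem tsum_tsum_shift_fst_add_shift_snd {u : ℕ × ℕ → α} (hu : Summable u) :
    ∑' n, ∑' m, (u (m + n, n) + u (n, m + n)) = ∑' p, u p + ∑' n, u (n, n) := by
  have hlow : Injective fun p : ℕ × ℕ => (p.2 + p.1, p.1) := by
    rintro ⟨n, m⟩ ⟨n', m'⟩ h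
    simp only [Prod.mk.injEq] at h ⊢
    omega
  have hup : Injective fun p : ℕ × ℕ => (p.1, p.2 + p.1) := by
    rintro ⟨n, m⟩ ⟨n', m'⟩ h
    simp only [Prod.mk.injEq] at h ⊢
    omega
  have hdiag : Injective fun n : ℕ => (n, n) := fun n n' h => (Prod.mk.inj h).1
  have hlow_sum : Summable fun p : ℕ × ℕ => u (p.2 + p.1, p.1) := hu.comp_injective hlow
  have hup_sum : Summable fun p : ℕ × ℕ => u (p.1, p.2 + p.1) := hu.comp_injective hup
  have hsum := hlow_sum.add hup_sum
  rw [← hsum.tsum_prod' hsum.prod_factor, hlow_sum.tsum_add hup_sum,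
    tsum_comp_eq_tsum_indicator_range hlow, tsum_comp_eq_tsum_indicator_range hup,
    tsum_comp_eq_tsum_indicator_range hdiag,
    range_shift_fst_eq_setOf_le, range_shift_snd_eq_setOf_le,
    ← setOf_le_inter_setOf_le_eq_range_diag, ← (hu.indicator _).tsum_add (hu.indicator _),
    ← hu.tsum_add (hu.indicator _)]
  have hcover : {p : ℕ × ℕ | p.2 ≤ p.1} ∪ {p | p.1 ≤ p.2} = univ :=
    eq_univ_of_forall fun p => le_total p.2 p.1
  refine tsum_congr fun p => ?_
  have := congrFun (indicator_union_add_inter u {p : ℕ × ℕ | p.2 ≤ p.1} {p | p.1 ≤ p.2}) p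
  rwa [hcover, indicator_univ, eq_comm] at this

end DoubleSeries

def jacksonTerm (q : ℝ) (f : ℝ → ℝ) (x : ℝ) (n : ℕ) : ℝ :=
  f (q ^ n * x) * (q ^ n * x)

section Jackson

variable (q : ℝ) (f g : ℝ → ℝ) (x : ℝ)

theorem jackson_eq_tsum_jacksonTerm : jackson q f x = (1 - q) * ∑' n, jacksonTerm q f x n := rfl

theorem jacksonTerm_pow_mul (n m : ℕ) :
    jacksonTerm q f (q ^ n * x) m = jacksonTerm q f x (m + n) := by
  simp only [jacksonTerm, pow_add, mul_assoc]

theorem jackson_pow_mul (n : ℕ) :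
    jackson q f (q ^ n * x) = (1 - q) * ∑' m, jacksonTerm q f x (m + n) := by
  simp only [jackson_eq_tsum_jacksonTerm, jacksonTerm_pow_mul]

theorem jacksonTerm_id_mul_mul (n : ℕ) :
    jacksonTerm q (fun y => y * (f y * g y)) x n = jacksonTerm q f x n * jacksonTerm q g x n := by
  simp only [jacksonTerm]
  ring

variable {q f g x}

theorem jacksonTerm_jackson_mul_add_mul_jackson (hf : Summable (jacksonTerm q f x))
    (hg : Summable (jacksonTerm q g x)) (n : ℕ) :
    jacksonTerm q (fun y => jackson q f y * g y + f y * jackson q g y) x n =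
      (1 - q) * ∑' m, (jacksonTerm q f x (m + n) * jacksonTerm q g x n +
        jacksonTerm q f x n * jacksonTerm q g x (m + n)) := by
  have hf_shift := (summable_nat_add_iff n).mpr hf
  have hg_shift := (summable_nat_add_iff n).mpr hg
  rw [(hf_shift.mul_right _).tsum_add (hg_shift.mul_left _), tsum_mul_right, tsum_mul_left]
  simp only [jacksonTerm, jackson_pow_mul]
  ring

end Jackson

theorem jackson_rota_baxter_general (q : ℝ) (f g : ℝ → ℝ)
    (hf : ∀ x : ℝ, Summable fun n : ℕ => f (q ^ n * x) * (q ^ n * x))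
    (hg : ∀ x : ℝ, Summable fun n : ℕ => g (q ^ n * x) * (q ^ n * x))
    (hfg : ∀ x : ℝ, Summable fun p : ℕ × ℕ =>
      (f (q ^ p.1 * x) * (q ^ p.1 * x)) * (g (q ^ p.2 * x) * (q ^ p.2 * x))) :
    ∀ x : ℝ, jackson q f x * jackson q g x
        + (1 - q) * jackson q (fun y => y * (f y * g y)) x =
      jackson q (fun y => jackson q f y * g y + f y * jackson q g y) x := by
  intro x
  have ha : Summable (jacksonTerm q f x) := hf x
  have hb : Summable (jacksonTerm q g x) := hg x
  have hab : Summable fun p : ℕ × ℕ => jacksonTerm q f x p.1 * jacksonTerm q g x p.2 := hfg x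
  calc _ = (1 - q) * ((1 - q) * (∑' p : ℕ × ℕ, jacksonTerm q f x p.1 * jacksonTerm q g x p.2
          + ∑' n, jacksonTerm q f x n * jacksonTerm q g x n)) := by
        simp only [jackson_eq_tsum_jacksonTerm q _ x, jacksonTerm_id_mul_mul,
          ← ha.tsum_mul_tsum hb hab]
        ring
    _ = _ := by
        rw [jackson_eq_tsum_jacksonTerm q _ x,
          tsum_congr (jacksonTerm_jackson_mul_add_mul_jackson ha hb), tsum_mul_left,
          tsum_tsum_shift_fst_add_shift_snd hab]

/-- The Rota–Baxter-type relation for the Jackson integral: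
`J[f]·J[g] + (1−q)·J[M_id[f·g]] = J[J[f]·g + f·J[g]]`. -/
theorem jackson_rota_baxter (q : ℝ) (hq0 : 0 < q) (hq1 : q < 1) (f g : ℝ → ℝ)
    (hf : ∀ x : ℝ, Summable fun n : ℕ => f (q ^ n * x) * (q ^ n * x))
    (hg : ∀ x : ℝ, Summable fun n : ℕ => g (q ^ n * x) * (q ^ n * x))
    (hfg : ∀ x : ℝ, Summable fun p : ℕ × ℕ =>
      (f (q ^ p.1 * x) * (q ^ p.1 * x)) * (g (q ^ p.2 * x) * (q ^ p.2 * x))) :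
    ∀ x : ℝ, jackson q f x * jackson q g x
        + (1 - q) * jackson q (fun y => y * (f y * g y)) x =
      jackson q (fun y => jackson q f y * g y + f y * jackson q g y) x :=
  jackson_rota_baxter_general q f g hf hg hfg
end

section
/- Let 0 < q < 1 and define \hat{J}[f](x) = (1−q) \sum_{n≥0} f(q^n x) (assuming absolute convergence). Then \hat{J}[f]·\hat{J}[g] = \hat{J}[\hat{J}[f]·g + f·\hat{J}[g] − (1−q)·f·g], i.e. \hat{J} is a Rota–Baxter operator of weight −(1−q). -/
open Set Function

lemma indicator_tsum_of_inj {F : ℕ × ℕ → ℝ} {s : Set (ℕ × ℕ)} {i : ℕ × ℕ → ℕ × ℕ}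
    (hi : Injective i) (hmem : ∀ p, i p ∈ s) (hsur : ∀ p ∈ s, ∃ y, i y = p) :
    (∑' p : ℕ × ℕ, F (i p)) = ∑' p, s.indicator F p := by
  have h := hi.tsum_eq (f := s.indicator F) (by
    intro p hp
    have hps : p ∈ s := by
      by_contra h
      exact hp (Set.indicator_of_notMem h F)
    exact hsur p hps)
  rw [← h]
  exact tsum_congr fun p => (Set.indicator_of_mem (hmem p) F).symm

lemma key_split (F : ℕ × ℕ → ℝ) (hF : Summable F) :
    (∑' p : ℕ × ℕ, F p) + ∑' n : ℕ, F (n, n)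
      = (∑' p : ℕ × ℕ, F (p.1 + p.2, p.1)) + ∑' p : ℕ × ℕ, F (p.1, p.1 + p.2) := by
  set s : Set (ℕ × ℕ) := {p | p.2 ≤ p.1} with hs
  set c : Set (ℕ × ℕ) := {p | p.1 < p.2} with hc
  set t : Set (ℕ × ℕ) := {p | p.1 ≤ p.2} with ht
  set d : Set (ℕ × ℕ) := {p | p.1 = p.2} with hd
  have hA : (∑' p : ℕ × ℕ, F (p.1 + p.2, p.1)) = ∑' p, s.indicator F p :=
    indicator_tsum_of_inj
      (fun a b h => by simp only [Prod.mk.injEq] at h; exact Prod.ext h.2 (by omega))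
      (fun p => Nat.le_add_right p.1 p.2)
      (fun p hp => by
        simp only [hs, Set.mem_setOf_eq] at hp
        exact ⟨(p.2, p.1 - p.2), Prod.ext (by simp; omega) rfl⟩)
  have hB : (∑' p : ℕ × ℕ, F (p.1, p.1 + p.2)) = ∑' p, t.indicator F p :=
    indicator_tsum_of_inj
      (fun a b h => by simp only [Prod.mk.injEq] at h; exact Prod.ext h.1 (by omega))
      (fun p => Nat.le_add_right p.1 p.2)
      (fun p hp => by
        simp only [ht, Set.mem_setOf_eq] at hp
        exact ⟨(p.1, p.2 - p.1), Prod.ext rfl (by simp; omega)⟩)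
  have hD : (∑' n : ℕ, F (n, n)) = ∑' p, d.indicator F p := by
    have hi : Injective (fun n : ℕ => ((n, n) : ℕ × ℕ)) := fun a b h => by
      simpa using congrArg Prod.fst h
    have h := hi.tsum_eq (f := d.indicator F) (by
      intro p hp
      have hps : p ∈ d := by
        by_contra h
        exact hp (Set.indicator_of_notMem h F)
      simp only [hd, Set.mem_setOf_eq] at hps
      exact ⟨p.1, Prod.ext rfl hps⟩)
    rw [← h]
    exact tsum_congr fun n => (Set.indicator_of_mem (show (n,n) ∈ d from rfl) F).symm
  have hSsum : Summable (s.indicator F) := hF.indicator s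
  have hCsum : Summable (c.indicator F) := hF.indicator c
  have hDsum : Summable (d.indicator F) := hF.indicator d
  have hFsplit : ∀ p, F p = s.indicator F p + c.indicator F p := by
    intro p
    simp only [Set.indicator_apply, hs, hc, Set.mem_setOf_eq]
    rcases le_or_gt p.2 p.1 with h | h
    · rw [if_pos h, if_neg (by omega), add_zero]
    · rw [if_neg (by omega), if_pos h, zero_add]
  have hTsplit : ∀ p, t.indicator F p = c.indicator F p + d.indicator F p := by
    intro p
    simp only [Set.indicator_apply, ht, hc, hd, Set.mem_setOf_eq]
    rcases lt_trichotomy p.1 p.2 with h | h | h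
    · rw [if_pos (le_of_lt h), if_pos h, if_neg (by omega), add_zero]
    · rw [if_pos (le_of_eq h), if_neg (by omega), if_pos h, zero_add]
    · rw [if_neg (by omega), if_neg (by omega), if_neg (by omega), add_zero]
  have hS : (∑' p : ℕ × ℕ, F p) = (∑' p, s.indicator F p) + ∑' p, c.indicator F p := by
    rw [← Summable.tsum_add hSsum hCsum]
    exact tsum_congr hFsplit
  have hT : (∑' p, t.indicator F p) = (∑' p, c.indicator F p) + ∑' p, d.indicator F p := by
    rw [← Summable.tsum_add hCsum hDsum]
    exact tsum_congr hTsplit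
  rw [hA, hB, hD, hS, hT]
  ring


/-- The modified Jackson integral `Ĵ[f](x) = (1−q) ∑_{n≥0} f(qⁿ x)`. -/
noncomputable def jacksonHat (q : ℝ) (f : ℝ → ℝ) (x : ℝ) : ℝ :=
  (1 - q) * ∑' n : ℕ, f (q ^ n * x)

/-- `Ĵ` is a Rota–Baxter operator of weight `−(1−q)`. -/
theorem jacksonHat_rota_baxter (q : ℝ) (hq0 : 0 < q) (hq1 : q < 1) (f g : ℝ → ℝ)
    (hf : ∀ x : ℝ, Summable fun n : ℕ => f (q ^ n * x))
    (hg : ∀ x : ℝ, Summable fun n : ℕ => g (q ^ n * x))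
    (hfg : ∀ x : ℝ, Summable fun p : ℕ × ℕ => f (q ^ p.1 * x) * g (q ^ p.2 * x)) :
    ∀ x : ℝ, jacksonHat q f x * jacksonHat q g x =
      jacksonHat q (fun y =>
        jacksonHat q f y * g y + f y * jacksonHat q g y - (1 - q) * (f y * g y)) x := by
  intro x
  set F : ℕ × ℕ → ℝ := fun p => f (q ^ p.1 * x) * g (q ^ p.2 * x) with hFdef
  have hF : Summable F := hfg x
  have hi1 : Injective (fun p : ℕ × ℕ => ((p.1 + p.2, p.1) : ℕ × ℕ)) := by
    intro a b h
    simp only [Prod.mk.injEq] at h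
    exact Prod.ext h.2 (by omega)
  have hi2 : Injective (fun p : ℕ × ℕ => ((p.1, p.1 + p.2) : ℕ × ℕ)) := by
    intro a b h
    simp only [Prod.mk.injEq] at h
    exact Prod.ext h.1 (by omega)
  have hid : Injective (fun n : ℕ => ((n, n) : ℕ × ℕ)) := fun a b h => by
    simpa using congrArg Prod.fst h
  have hG1 : Summable (fun p : ℕ × ℕ => F (p.1 + p.2, p.1)) := hF.comp_injective hi1
  have hG2 : Summable (fun p : ℕ × ℕ => F (p.1, p.1 + p.2)) := hF.comp_injective hi2
  have hDg : Summable (fun n : ℕ => F (n, n)) := hF.comp_injective hid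
  have hAh : HasSum (fun n : ℕ => ∑' m : ℕ, F (n + m, n))
      (∑' p : ℕ × ℕ, F (p.1 + p.2, p.1)) :=
    hG1.hasSum.prod_fiberwise (fun n => (hG1.prod_factor n).hasSum)
  have hBh : HasSum (fun n : ℕ => ∑' m : ℕ, F (n, n + m))
      (∑' p : ℕ × ℕ, F (p.1, p.1 + p.2)) :=
    hG2.hasSum.prod_fiberwise (fun n => (hG2.prod_factor n).hasSum)
  have hmain : HasSum (fun n : ℕ => (∑' m : ℕ, F (n + m, n)) + (∑' m : ℕ, F (n, n + m)) - F (n, n))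
      ((∑' p : ℕ × ℕ, F (p.1 + p.2, p.1)) + (∑' p : ℕ × ℕ, F (p.1, p.1 + p.2))
        - ∑' n : ℕ, F (n, n)) :=
    (hAh.add hBh).sub hDg.hasSum
  have hkey := key_split F hF
  have hSum : (∑' n : ℕ, ((∑' m : ℕ, F (n + m, n)) + (∑' m : ℕ, F (n, n + m)) - F (n, n)))
      = ∑' p : ℕ × ℕ, F p := by
    rw [hmain.tsum_eq]
    linarith [hkey]
  have hpt : ∀ n m : ℕ, q ^ m * (q ^ n * x) = q ^ (n + m) * x := by
    intro n m
    rw [← mul_assoc, ← pow_add, Nat.add_comm]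
  have hinner : ∀ n : ℕ,
      (fun y => jacksonHat q f y * g y + f y * jacksonHat q g y - (1 - q) * (f y * g y)) (q ^ n * x)
        = (1 - q) * ((∑' m : ℕ, F (n + m, n)) + (∑' m : ℕ, F (n, n + m)) - F (n, n)) := by
    intro n
    simp only [jacksonHat, hFdef]
    have h1 : (∑' m : ℕ, f (q ^ m * (q ^ n * x))) = ∑' m : ℕ, f (q ^ (n + m) * x) :=
      tsum_congr fun m => by rw [hpt]
    have h2 : (∑' m : ℕ, g (q ^ m * (q ^ n * x))) = ∑' m : ℕ, g (q ^ (n + m) * x) :=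
      tsum_congr fun m => by rw [hpt]
    have e1 : (∑' m : ℕ, f (q ^ (n + m) * x) * g (q ^ n * x))
        = (∑' m : ℕ, f (q ^ (n + m) * x)) * g (q ^ n * x) := tsum_mul_right
    have e2 : (∑' m : ℕ, f (q ^ n * x) * g (q ^ (n + m) * x))
        = f (q ^ n * x) * (∑' m : ℕ, g (q ^ (n + m) * x)) := tsum_mul_left
    rw [h1, h2, e1, e2]
    ring
  have hLHS : jacksonHat q f x * jacksonHat q g x = (1 - q) ^ 2 * ∑' p : ℕ × ℕ, F p := by
    simp only [jacksonHat, hFdef]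
    rw [mul_mul_mul_comm, Summable.tsum_mul_tsum (hf x) (hg x) (hfg x)]
    ring
  rw [hLHS]
  show (1 - q) ^ 2 * ∑' p : ℕ × ℕ, F p = (1 - q) * ∑' n : ℕ, _
  rw [tsum_congr hinner, tsum_mul_left, hSum]
  ring
end

section
/- For 0 < q < 1 and natural numbers n, m ≥ 2, the modified q-multiple zeta values satisfy the quasi-shuffle identity: \bar{z}_q(n)·\bar{z}_q(m) = \bar{z}_q(n,m) + \bar{z}_q(m,n) + \bar{z}_q(n+m) − \bar{z}_q(n,m−1) − \bar{z}_q(m,n−1) − \bar{z}_q(n+m−1), where here the unmodified relation for \bar{z}_q uses the identity q^{l_1+l_2} = q^{l_1} − q^{l_1}(1−q^{l_2}). -/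
/-- Modified qMZV of length one: `z̄_q(n) = ∑_{m>0} qᵐ/(1−qᵐ)ⁿ`. -/
noncomputable def zbar1 (q : ℝ) (n : ℕ) : ℝ := ∑' m : ℕ, q ^ (m + 1) / (1 - q ^ (m + 1)) ^ n

/-- Modified qMZV of length two:
`z̄_q(a,b) = ∑_{m₁>m₂>0} q^{m₁}/((1−q^{m₁})ᵃ (1−q^{m₂})ᵇ)`. -/
noncomputable def zbar2 (q : ℝ) (a b : ℕ) : ℝ :=
  ∑' p : ℕ × ℕ, if p.2 < p.1 ∧ 0 < p.2 then
    q ^ p.1 / ((1 - q ^ p.1) ^ a * (1 - q ^ p.2) ^ b) else 0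

/-!
Expand `z̄_q(n) z̄_q(m)` as a double sum over pairs `(m₁, m₂)` and split it into the regions
`m₁ > m₂`, `m₁ < m₂` and `m₁ = m₂`. Writing `qᵏ = 1 - (1 - qᵏ)` in the factor with the smaller
index gives `qᵏ / (1 - qᵏ)ᵇ = 1 / (1 - qᵏ)ᵇ - 1 / (1 - qᵏ)ᵇ⁻¹`, so each region contributes a
difference of two depth-two values (or, on the diagonal, of two depth-one values).
-/

/-- Summands are indexed from `0`: the index `k` stands for `m = k + 1`. -/
noncomputable def zbarTerm (q : ℝ) (a k : ℕ) : ℝ := q ^ (k + 1) / (1 - q ^ (k + 1)) ^ a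

noncomputable def zbar2Term (q : ℝ) (a b : ℕ) (p : ℕ × ℕ) : ℝ :=
  if p.2 < p.1 then zbarTerm q a p.1 / (1 - q ^ (p.2 + 1)) ^ b else 0

noncomputable def zbarDiagTerm (q : ℝ) (a : ℕ) (p : ℕ × ℕ) : ℝ :=
  if p.1 = p.2 then zbarTerm q a p.1 else 0

section

variable {q : ℝ}

lemma zbarTerm_div_pow (a c k : ℕ) :
    zbarTerm q a k / (1 - q ^ (k + 1)) ^ c = zbarTerm q (a + c) k := by
  rw [zbarTerm, zbarTerm, div_div, ← pow_add]

lemma one_sub_pow_succ_pos (hq0 : 0 ≤ q) (hq1 : q < 1) (k : ℕ) : 0 < 1 - q ^ (k + 1) :=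
  sub_pos.mpr (pow_lt_one₀ hq0 hq1 k.succ_ne_zero)

lemma zbarTerm_succ_eq_sub (hq0 : 0 ≤ q) (hq1 : q < 1) (b k : ℕ) :
    zbarTerm q (b + 1) k = 1 / (1 - q ^ (k + 1)) ^ (b + 1) - 1 / (1 - q ^ (k + 1)) ^ b := by
  have := (one_sub_pow_succ_pos hq0 hq1 k).ne'
  rw [zbarTerm]
  field_simp
  ring

lemma zbarTerm_nonneg (hq0 : 0 ≤ q) (hq1 : q < 1) (a k : ℕ) : 0 ≤ zbarTerm q a k :=
  div_nonneg (pow_nonneg hq0 _) (pow_nonneg (one_sub_pow_succ_pos hq0 hq1 k).le _)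

lemma one_div_one_sub_pow_le (hq0 : 0 ≤ q) (hq1 : q < 1) (a k : ℕ) :
    1 / (1 - q ^ (k + 1)) ^ a ≤ 1 / (1 - q) ^ a := by
  have hk : q ^ (k + 1) ≤ q := pow_le_of_le_one hq0 hq1.le k.succ_ne_zero
  gcongr

lemma zbarTerm_le (hq0 : 0 ≤ q) (hq1 : q < 1) (a k : ℕ) :
    zbarTerm q a k ≤ q ^ (k + 1) * (1 / (1 - q) ^ a) := by
  rw [zbarTerm, div_eq_mul_one_div]
  exact mul_le_mul_of_nonneg_left (one_div_one_sub_pow_le hq0 hq1 a k) (pow_nonneg hq0 _)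

lemma summable_pow_succ (hq0 : 0 ≤ q) (hq1 : q < 1) : Summable fun k : ℕ => q ^ (k + 1) := by
  simpa only [pow_succ] using (summable_geometric_of_lt_one hq0 hq1).mul_right q

lemma hasSum_zbar1 (hq0 : 0 ≤ q) (hq1 : q < 1) (a : ℕ) : HasSum (zbarTerm q a) (zbar1 q a) :=
  (Summable.of_nonneg_of_le (zbarTerm_nonneg hq0 hq1 a) (zbarTerm_le hq0 hq1 a)
    ((summable_pow_succ hq0 hq1).mul_right _)).hasSum

lemma hasSum_zbarDiagTerm (hq0 : 0 ≤ q) (hq1 : q < 1) (a : ℕ) :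
    HasSum (zbarDiagTerm q a) (zbar1 q a) := by
  have hinj : Function.Injective fun k : ℕ => (k, k) := fun _ _ h => congrArg Prod.fst h
  refine (hinj.hasSum_iff fun p hp => if_neg fun h => hp ⟨p.1, Prod.ext rfl h⟩).mp ?_
  simpa [Function.comp_def, zbarDiagTerm] using hasSum_zbar1 hq0 hq1 a

lemma summable_zbar2Term (hq0 : 0 ≤ q) (hq1 : q < 1) (a b : ℕ) :
    Summable (zbar2Term q a b) := by
  -- writing `x = y + d + 1` on the region `y < x` makes `q ^ (x + 1) = q ^ (d + 1) * q ^ (y + 1)`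
  -- a product of two geometric terms
  set e : ℕ × ℕ → ℕ × ℕ := fun d => (d.2 + d.1 + 1, d.2)
  have he : Function.Injective e := fun d d' h => by
    simp only [e, Prod.ext_iff] at h ⊢
    omega
  have hzero : ∀ p ∉ Set.range e, zbar2Term q a b p = 0 := fun p hp =>
    if_neg fun h => hp ⟨(p.1 - p.2 - 1, p.2), Prod.ext (by simp [e]; omega) rfl⟩
  refine (he.summable_iff hzero).mp ?_
  have hmaj : Summable fun d : ℕ × ℕ => q ^ (d.1 + 1) * (q ^ (d.2 + 1) * (1 / (1 - q) ^ (a + b))) :=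
    Summable.mul_of_nonneg (f := fun k => q ^ (k + 1))
      (g := fun k => q ^ (k + 1) * (1 / (1 - q) ^ (a + b))) (summable_pow_succ hq0 hq1)
      ((summable_pow_succ hq0 hq1).mul_right _) (fun _ => pow_nonneg hq0 _)
      (fun _ => mul_nonneg (pow_nonneg hq0 _) (one_div_nonneg.mpr (pow_nonneg (by linarith) _)))
  refine hmaj.of_nonneg_of_le (fun d => ?_) (fun d => ?_)
  · simp only [Function.comp_apply, e, zbar2Term, if_pos (by omega : d.2 < d.2 + d.1 + 1)]
    exact div_nonneg (zbarTerm_nonneg hq0 hq1 _ _)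
      (pow_nonneg (one_sub_pow_succ_pos hq0 hq1 _).le _)
  · simp only [Function.comp_apply, e, zbar2Term, if_pos (by omega : d.2 < d.2 + d.1 + 1)]
    calc zbarTerm q a (d.2 + d.1 + 1) / (1 - q ^ (d.2 + 1)) ^ b
        = zbarTerm q a (d.2 + d.1 + 1) * (1 / (1 - q ^ (d.2 + 1)) ^ b) := div_eq_mul_one_div _ _
      _ ≤ q ^ (d.2 + d.1 + 1 + 1) * (1 / (1 - q) ^ a) * (1 / (1 - q) ^ b) :=
          mul_le_mul (zbarTerm_le hq0 hq1 a _) (one_div_one_sub_pow_le hq0 hq1 b _)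
            (one_div_nonneg.mpr (pow_nonneg (one_sub_pow_succ_pos hq0 hq1 _).le _))
            (mul_nonneg (pow_nonneg hq0 _) (one_div_nonneg.mpr (pow_nonneg (by linarith) _)))
      _ = _ := by ring

lemma hasSum_zbar2 (hq0 : 0 ≤ q) (hq1 : q < 1) (a b : ℕ) :
    HasSum (zbar2Term q a b) (zbar2 q a b) := by
  set f : ℕ × ℕ → ℝ := fun p => if p.2 < p.1 ∧ 0 < p.2 then
    q ^ p.1 / ((1 - q ^ p.1) ^ a * (1 - q ^ p.2) ^ b) else 0
  set s : ℕ × ℕ → ℕ × ℕ := fun p => (p.1 + 1, p.2 + 1)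
  have hs : Function.Injective s := fun p p' h => by
    simp only [s, Prod.ext_iff] at h ⊢
    omega
  have hzero : ∀ p ∉ Set.range s, f p = 0 := fun p hp =>
    if_neg fun h => hp ⟨(p.1 - 1, p.2 - 1), Prod.ext (by simp [s]; omega) (by simp [s]; omega)⟩
  have hfs : f ∘ s = zbar2Term q a b := funext fun p => by
    simp [f, s, zbar2Term, zbarTerm, div_div]
  have hf : HasSum f (∑' p, zbar2Term q a b p) :=
    (hs.hasSum_iff hzero).mp (hfs ▸ (summable_zbar2Term hq0 hq1 a b).hasSum)
  rw [zbar2, hf.tsum_eq]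
  exact (summable_zbar2Term hq0 hq1 a b).hasSum

lemma hasSum_zbar2_swap (hq0 : 0 ≤ q) (hq1 : q < 1) (a b : ℕ) :
    HasSum (fun p : ℕ × ℕ => zbar2Term q a b p.swap) (zbar2 q a b) :=
  ((Equiv.prodComm ℕ ℕ).hasSum_iff (f := zbar2Term q a b)).mpr (hasSum_zbar2 hq0 hq1 a b)

lemma zbarTerm_mul_zbarTerm (hq0 : 0 ≤ q) (hq1 : q < 1) (a b x y : ℕ) :
    zbarTerm q (a + 1) x * zbarTerm q (b + 1) y =
      zbar2Term q (a + 1) (b + 1) (x, y) + zbar2Term q (b + 1) (a + 1) (y, x)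
        + zbarDiagTerm q (a + b + 2) (x, y) - zbar2Term q (a + 1) b (x, y)
        - zbar2Term q (b + 1) a (y, x) - zbarDiagTerm q (a + b + 1) (x, y) := by
  rcases lt_trichotomy y x with h | rfl | h
  · simp only [zbar2Term, zbarDiagTerm, if_pos h, if_neg h.not_gt, if_neg h.ne']
    rw [zbarTerm_succ_eq_sub hq0 hq1 b y]
    ring
  · simp only [zbar2Term, zbarDiagTerm, lt_irrefl, if_false, if_true]
    rw [zbarTerm_succ_eq_sub hq0 hq1 b y, show a + b + 2 = a + 1 + (b + 1) by ring,
      show a + b + 1 = a + 1 + b by ring, ← zbarTerm_div_pow (a + 1) (b + 1) y,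
      ← zbarTerm_div_pow (a + 1) b y]
    ring
  · simp only [zbar2Term, zbarDiagTerm, if_pos h, if_neg h.not_gt, if_neg h.ne]
    rw [zbarTerm_succ_eq_sub hq0 hq1 a x]
    ring

end

/-- Quasi-shuffle identity for the modified qMZVs. -/
theorem zbar_quasi_shuffle (q : ℝ) (hq0 : 0 < q) (hq1 : q < 1) (n m : ℕ)
    (hn : 2 ≤ n) (hm : 2 ≤ m) :
    zbar1 q n * zbar1 q m =
      zbar2 q n m + zbar2 q m n + zbar1 q (n + m)
        - zbar2 q n (m - 1) - zbar2 q m (n - 1) - zbar1 q (n + m - 1) := by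
  obtain ⟨a, rfl⟩ : ∃ a, n = a + 1 := ⟨n - 1, by omega⟩
  obtain ⟨b, rfl⟩ : ∃ b, m = b + 1 := ⟨m - 1, by omega⟩
  have hq0' := hq0.le
  rw [show a + 1 + (b + 1) = a + b + 2 by ring, show a + b + 2 - 1 = a + b + 1 by omega,
    Nat.add_sub_cancel, Nat.add_sub_cancel]
  refine (hasSum_zbar1 hq0' hq1 _).mul_eq (hasSum_zbar1 hq0' hq1 _) ?_
  exact (((((hasSum_zbar2 hq0' hq1 _ _).add (hasSum_zbar2_swap hq0' hq1 _ _)).add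
    (hasSum_zbarDiagTerm hq0' hq1 _)).sub (hasSum_zbar2 hq0' hq1 _ _)).sub
    (hasSum_zbar2_swap hq0' hq1 _ _)).sub (hasSum_zbarDiagTerm hq0' hq1 _)
    |>.congr_fun fun p => zbarTerm_mul_zbarTerm hq0' hq1 a b p.1 p.2
end

section
/- For 0 < q < 1 and integers n, m ≥ 2, Bradley's q-multiple zeta values satisfy: ζ_q(n)·ζ_q(m) = ζ_q(n,m) + ζ_q(m,n) + ζ_q(n+m) + (1−q)·ζ_q(n+m−1). -/
/-- The q-number `[m]_q = (1−qᵐ)/(1−q)`. -/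
noncomputable def qnum (q : ℝ) (m : ℕ) : ℝ := (1 - q ^ m) / (1 - q)

/-- Bradley's qMZV of length one: `ζ_q(n) = ∑_{m>0} q^{(n−1)m}/[m]_qⁿ`. -/
noncomputable def zetaq1 (q : ℝ) (n : ℕ) : ℝ :=
  ∑' m : ℕ, q ^ ((n - 1) * (m + 1)) / qnum q (m + 1) ^ n

/-- Bradley's qMZV of length two. -/
noncomputable def zetaq2 (q : ℝ) (a b : ℕ) : ℝ :=
  ∑' p : ℕ × ℕ, if p.2 < p.1 ∧ 0 < p.2 then
    q ^ ((a - 1) * p.1 + (b - 1) * p.2) / (qnum q p.1 ^ a * qnum q p.2 ^ b) else 0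

/-! With `t_a(k) = q^{(a-1)k} / [k]_q^a`, the product `ζ_q(n) ζ_q(m)` is the absolutely convergent
double series `∑_{i,j} t_n(i) t_m(j)`. Splitting it along `j < i`, `i < j` and `i = j` gives
`ζ_q(n,m)`, `ζ_q(m,n)` and a diagonal series, and on the diagonal `(1 - q)[k]_q = 1 - q^k` turns
`t_n(k) t_m(k)` into `t_{n+m}(k) + (1 - q) t_{n+m-1}(k)`. -/

theorem tsum_diag_indicator {ι α : Type*} [AddCommMonoid α] [TopologicalSpace α]
    (F : ι × ι → α) : ∑' p, {p : ι × ι | p.1 = p.2}.indicator F p = ∑' i, F (i, i) := by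
  have hsupp : Function.support ({p : ι × ι | p.1 = p.2}.indicator F) ⊆
      Set.range fun i => (i, i) := fun p hp => by
    have hp' : p ∈ {p : ι × ι | p.1 = p.2} := Set.support_indicator_subset hp
    exact ⟨p.1, Prod.ext rfl hp'⟩
  have hinj : Function.Injective fun i : ι => (i, i) := fun i j h => (Prod.ext_iff.mp h).1
  rw [← hinj.tsum_eq hsupp]
  simp

theorem tsum_prod_eq_lower_add_upper_add_diag {ι α : Type*} [LinearOrder ι] [AddCommGroup α]
    [UniformSpace α] [IsUniformAddGroup α] [CompleteSpace α] [T2Space α]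
    {F : ι × ι → α} (hF : Summable F) :
    ∑' p, F p = ∑' p, {p : ι × ι | p.2 < p.1}.indicator F p +
      ∑' p, {p : ι × ι | p.2 < p.1}.indicator (F ∘ Prod.swap) p + ∑' i, F (i, i) := by
  have hlower := hF.indicator {p | p.2 < p.1}
  have hupper := hF.indicator {p | p.1 < p.2}
  have hdiag := hF.indicator {p | p.1 = p.2}
  have hsplit (p : ι × ι) : F p = {p | p.2 < p.1}.indicator F p + {p | p.1 < p.2}.indicator F p +
      {p | p.1 = p.2}.indicator F p := by
    obtain ⟨i, j⟩ := p
    rcases lt_trichotomy j i with h | rfl | h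
    · simp [h, h.not_gt, h.ne']
    · simp
    · simp [h, h.not_gt, h.ne]
  have hswap (p : ι × ι) : {p : ι × ι | p.1 < p.2}.indicator F p =
      {p : ι × ι | p.2 < p.1}.indicator (F ∘ Prod.swap) p.swap := by
    simp [Set.indicator_apply]
  rw [tsum_congr hsplit, (hlower.add hupper).tsum_add hdiag, hlower.tsum_add hupper,
    tsum_diag_indicator, tsum_congr hswap]
  congr 2
  exact (Equiv.prodComm ι ι).tsum_eq _

theorem tsum_mul_tsum_eq_lower_add_upper_add_diag {ι R : Type*} [LinearOrder ι] [NormedRing R]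
    [CompleteSpace R] {f g : ι → R} (hf : Summable fun i => ‖f i‖)
    (hg : Summable fun i => ‖g i‖) :
    (∑' i, f i) * (∑' i, g i) =
      ∑' p, {p : ι × ι | p.2 < p.1}.indicator (fun p => f p.1 * g p.2) p +
      ∑' p, {p : ι × ι | p.2 < p.1}.indicator (fun p => f p.2 * g p.1) p + ∑' i, f i * g i := by
  rw [tsum_mul_tsum_of_summable_norm hf hg]
  exact tsum_prod_eq_lower_add_upper_add_diag (summable_mul_of_summable_norm hf hg)

section Bradley

variable {q : ℝ}

theorem qnum_zero : qnum q 0 = 0 := by simp [qnum]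

theorem one_sub_mul_qnum (hq : q ≠ 1) (k : ℕ) : (1 - q) * qnum q k = 1 - q ^ k :=
  mul_div_cancel₀ _ (sub_ne_zero.mpr hq.symm)

theorem qnum_nonneg (hq0 : 0 ≤ q) (hq1 : q < 1) (k : ℕ) : 0 ≤ qnum q k :=
  div_nonneg (sub_nonneg.mpr (pow_le_one₀ hq0 hq1.le)) (sub_nonneg.mpr hq1.le)

theorem one_le_qnum (hq0 : 0 ≤ q) (hq1 : q < 1) {k : ℕ} (hk : k ≠ 0) : 1 ≤ qnum q k := by
  rw [qnum, le_div_iff₀ (sub_pos.mpr hq1), one_mul, sub_le_sub_iff_left]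
  simpa using pow_le_pow_of_le_one hq0 hq1.le (Nat.one_le_iff_ne_zero.mpr hk)

noncomputable def zetaqTerm (q : ℝ) (a k : ℕ) : ℝ := q ^ ((a - 1) * k) / qnum q k ^ a

/-- A junk value (`[0]_q = 0` and `x / 0 = 0`); it lets the series run over all of `ℕ` and absorbs
the condition `0 < p.2` of `zetaq2`. -/
theorem zetaqTerm_zero {a : ℕ} (ha : a ≠ 0) : zetaqTerm q a 0 = 0 := by
  simp [zetaqTerm, qnum_zero, ha]

theorem zetaqTerm_nonneg (hq0 : 0 ≤ q) (hq1 : q < 1) (a k : ℕ) : 0 ≤ zetaqTerm q a k :=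
  div_nonneg (pow_nonneg hq0 _) (pow_nonneg (qnum_nonneg hq0 hq1 k) _)

theorem zetaqTerm_le_pow (hq0 : 0 ≤ q) (hq1 : q < 1) {a : ℕ} (ha : 2 ≤ a) (k : ℕ) :
    zetaqTerm q a k ≤ q ^ k := by
  rcases eq_or_ne k 0 with rfl | hk
  · simp [zetaqTerm_zero (by omega : a ≠ 0)]
  calc zetaqTerm q a k ≤ q ^ ((a - 1) * k) :=
        div_le_self (pow_nonneg hq0 _) (one_le_pow₀ (one_le_qnum hq0 hq1 hk))
    _ ≤ q ^ k := pow_le_pow_of_le_one hq0 hq1.le (Nat.le_mul_of_pos_left k (by omega))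

theorem summable_norm_zetaqTerm (hq0 : 0 ≤ q) (hq1 : q < 1) {a : ℕ} (ha : 2 ≤ a) :
    Summable fun k => ‖zetaqTerm q a k‖ :=
  (summable_geometric_of_lt_one hq0 hq1).of_nonneg_of_le (fun _ => norm_nonneg _) fun k => by
    rw [Real.norm_of_nonneg (zetaqTerm_nonneg hq0 hq1 a k)]
    exact zetaqTerm_le_pow hq0 hq1 ha k

theorem tsum_zetaqTerm {a : ℕ} (ha : a ≠ 0) (hs : Summable (zetaqTerm q a)) :
    ∑' k, zetaqTerm q a k = zetaq1 q a := by
  rw [hs.tsum_eq_zero_add, zetaqTerm_zero ha, zero_add]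
  rfl

theorem zetaq2_eq_tsum_lower (a : ℕ) {b : ℕ} (hb : b ≠ 0) :
    zetaq2 q a b = ∑' p, {p : ℕ × ℕ | p.2 < p.1}.indicator
      (fun p => zetaqTerm q a p.1 * zetaqTerm q b p.2) p := by
  refine tsum_congr fun p => ?_
  rcases eq_or_ne p.2 0 with h | h
  · simp [Set.indicator_apply, h, zetaqTerm_zero hb]
  · simp [Set.indicator_apply, Nat.pos_of_ne_zero h, zetaqTerm, pow_add, div_mul_div_comm]

theorem zetaqTerm_mul_zetaqTerm (hq : q ≠ 1) {n m : ℕ} (hn : n ≠ 0) (hm : m ≠ 0) (k : ℕ) :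
    zetaqTerm q n k * zetaqTerm q m k =
      zetaqTerm q (n + m) k + (1 - q) * zetaqTerm q (n + m - 1) k := by
  obtain ⟨a, rfl⟩ := Nat.exists_eq_add_one_of_ne_zero hn
  obtain ⟨b, rfl⟩ := Nat.exists_eq_add_one_of_ne_zero hm
  rcases eq_or_ne (qnum q k) 0 with hQ | hQ
  · simp [zetaqTerm, hQ]
  have hsum : a + 1 + (b + 1) - 1 = a + b + 1 := by omega
  simp only [zetaqTerm, hsum, Nat.add_sub_cancel, pow_mul']
  field_simp
  linear_combination (-(qnum q k ^ (a + 1) * qnum q k ^ (b + 1) * qnum q k ^ (a + b + 1) *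
    (q ^ k) ^ (a + b))) * one_sub_mul_qnum hq k

end Bradley

/-- Quasi-shuffle product for Bradley's qMZVs. -/
theorem zetaq_quasi_shuffle (q : ℝ) (hq0 : 0 < q) (hq1 : q < 1) (n m : ℕ)
    (hn : 2 ≤ n) (hm : 2 ≤ m) :
    zetaq1 q n * zetaq1 q m =
      zetaq2 q n m + zetaq2 q m n + zetaq1 q (n + m) + (1 - q) * zetaq1 q (n + m - 1) := by
  have hnorm {a : ℕ} (ha : 2 ≤ a) := summable_norm_zetaqTerm hq0.le hq1 ha
  have htsum {a : ℕ} (ha : 2 ≤ a) : ∑' k, zetaqTerm q a k = zetaq1 q a :=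
    tsum_zetaqTerm (by omega) (hnorm ha).of_norm
  have hnm : 2 ≤ n + m - 1 := by omega
  rw [← htsum hn, ← htsum hm, ← htsum (by omega : 2 ≤ n + m), ← htsum hnm,
    tsum_mul_tsum_eq_lower_add_upper_add_diag (hnorm hn) (hnorm hm),
    zetaq2_eq_tsum_lower n (by omega), zetaq2_eq_tsum_lower m (by omega),
    tsum_congr (zetaqTerm_mul_zetaqTerm hq1.ne (by omega) (by omega)),
    (hnorm (by omega)).of_norm.tsum_add ((hnorm hnm).of_norm.mul_left _), tsum_mul_left]
  simp only [mul_comm (zetaqTerm q n _), add_assoc]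
end

section
/- For integers a ≥ 2, b ≥ 2, the alternating sum of the coefficients c_j := (−1)^{a−j−1} binom(j+b−1; j, j+b−a, a−1−j) divided by (j+b−1) vanishes: \sum_{j=0}^{a−1} (−1)^{a−j−1}/(j+b−1) · binom(j+b−1; j, j+b−a, a−1−j) = 0, for 2 ≤ a ≤ b. Equivalently, \sum_{j=0}^{a−1} (−1)^j binom(a−1, j) P(j) = 0 for any polynomial P of degree at most a−2. -/
open Nat
open Finset


lemma fwdDiff_poly_eq (P : Polynomial ℝ) :
    fwdDiff (1:ℝ) (fun x => P.eval x) =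
      fun x => (P.comp (Polynomial.X + Polynomial.C 1) - P).eval x := by
  funext x
  simp [fwdDiff, Polynomial.eval_comp]

lemma fwdDiff_iter_poly_zero : ∀ (n : ℕ) (P : Polynomial ℝ), P.degree < n →
    (fwdDiff (1:ℝ))^[n] (fun x => P.eval x) = fun _ => 0 := by
  intro n
  induction n with
  | zero =>
    intro P hP
    have : P = 0 := by
      rw [← Polynomial.degree_eq_bot]
      exact WithBot.lt_zero_iff.mp (by exact_mod_cast hP)
    subst this; simp
  | succ n ih =>
    intro P hP
    rw [Function.iterate_succ_apply, fwdDiff_poly_eq]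
    by_cases h0 : P = 0
    · subst h0
      have : ((0 : Polynomial ℝ).comp (Polynomial.X + Polynomial.C 1) -
          (0 : Polynomial ℝ)) = 0 := by simp
      rw [this]
      exact ih 0 (by rw [Polynomial.degree_zero]; exact WithBot.bot_lt_coe n)
    have hdq : (Polynomial.X + Polynomial.C (1:ℝ)).natDegree = 1 :=
      Polynomial.natDegree_X_add_C 1
    have hcne : P.comp (Polynomial.X + Polynomial.C 1) ≠ 0 := by
      intro h
      rw [Polynomial.comp_eq_zero_iff] at h
      rcases h with h | ⟨_, h⟩
      · exact h0 h
      · have := congrArg Polynomial.natDegree h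
        rw [hdq, Polynomial.natDegree_C] at this
        exact one_ne_zero this
    have hco : (P.comp (Polynomial.X + Polynomial.C 1)).degree = P.degree := by
      rw [Polynomial.degree_eq_natDegree hcne, Polynomial.degree_eq_natDegree h0,
        Polynomial.natDegree_comp, hdq, mul_one]
    have hlt : (P.comp (Polynomial.X + Polynomial.C 1) - P).degree < P.degree := by
      rw [← hco]
      apply Polynomial.degree_sub_lt hco hcne
      rw [Polynomial.leadingCoeff_comp (by rw [hdq]; norm_num),
        Polynomial.leadingCoeff_X_add_C, one_pow, mul_one]
    apply ih
    have hPn : P.degree ≤ (n : WithBot ℕ) := by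
      rw [Polynomial.degree_eq_natDegree h0] at hP ⊢
      exact_mod_cast Nat.lt_succ_iff.mp (by exact_mod_cast hP)
    exact lt_of_lt_of_le hlt hPn

lemma alt_sum_poly (m : ℕ) (P : Polynomial ℝ) (hP : P.degree < m) :
    ∑ j ∈ Finset.range (m + 1),
      (-1 : ℝ) ^ j * (Nat.choose m j : ℝ) * P.eval (j : ℝ) = 0 := by
  have h1 := fwdDiff_iter_eq_sum_shift (1:ℝ) (fun x => P.eval x) m 0
  rw [fwdDiff_iter_poly_zero m P hP] at h1
  have h2 : (0:ℝ) = ∑ k ∈ Finset.range (m+1),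
      ((-1:ℝ) ^ (m - k) * (Nat.choose m k : ℝ)) * P.eval (k : ℝ) := by
    have h1' : (0:ℝ) = ∑ k ∈ Finset.range (m+1),
        ((-1 : ℤ) ^ (m - k) * (m.choose k : ℤ)) •
          (fun x : ℝ => P.eval x) (0 + k • (1:ℝ)) := h1
    rw [h1']
    apply Finset.sum_congr rfl
    intro k _
    simp only [zsmul_eq_mul, zero_add, nsmul_eq_mul, mul_one]
    push_cast
    ring
  have h3 : ∑ j ∈ Finset.range (m+1), (-1:ℝ)^j * (Nat.choose m j : ℝ) * P.eval (j:ℝ)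
      = (-1:ℝ)^m * ∑ k ∈ Finset.range (m+1),
        ((-1:ℝ) ^ (m - k) * (Nat.choose m k : ℝ)) * P.eval (k : ℝ) := by
    rw [Finset.mul_sum]
    apply Finset.sum_congr rfl
    intro k hk
    have hk' : k ≤ m := Nat.lt_succ_iff.mp (Finset.mem_range.mp hk)
    have hs : (-1:ℝ) ^ (m - k) * (-1:ℝ)^k = (-1:ℝ)^m := by
      rw [← pow_add, Nat.sub_add_cancel hk']
    have : (-1:ℝ)^k = (-1:ℝ)^m * (-1:ℝ)^(m-k) := by
      have h4 : ((-1:ℝ)^(m-k)) * ((-1:ℝ)^(m-k)) = 1 := by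
        rw [← pow_add]
        exact Even.neg_one_pow ⟨m - k, rfl⟩
      calc (-1:ℝ)^k = ((-1:ℝ)^(m-k) * (-1:ℝ)^(m-k)) * (-1:ℝ)^k := by rw [h4, one_mul]
        _ = (-1:ℝ)^(m-k) * ((-1:ℝ)^(m-k) * (-1:ℝ)^k) := by ring
        _ = (-1:ℝ)^(m-k) * (-1:ℝ)^m := by
            rw [← pow_add, Nat.sub_add_cancel hk']
        _ = _ := by ring
    rw [this]; ring
  rw [h3, ← h2, mul_zero]

lemma prod_fact (m : ℕ) : ∀ k : ℕ,
    ((m ! : ℕ) : ℝ) * ∏ i ∈ Finset.range k, ((m : ℝ) + i + 1) = (((m + k)! : ℕ) : ℝ) := by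
  intro k
  induction k with
  | zero => simp
  | succ k ih =>
    rw [Finset.prod_range_succ, ← mul_assoc, ih]
    have : (m + (k+1))! = (m + k + 1) * (m + k)! := by
      rw [← Nat.add_assoc]; exact Nat.factorial_succ _
    rw [this]
    push_cast
    ring

/-- For `2 ≤ a ≤ b`, the alternating sum
`∑_{j=0}^{a−1} (−1)^{a−j−1}/(j+b−1) · binom(j+b−1; j, j+b−a, a−1−j)` vanishes;
equivalently, `∑_{j=0}^{a−1} (−1)ʲ binom(a−1,j) P(j) = 0` for any polynomial `P`
of degree at most `a−2`. -/
theorem alternating_sum_vanishes (a b : ℕ) (ha : 2 ≤ a) (hab : a ≤ b) :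
    (∑ j ∈ Finset.range a,
        (-1 : ℝ) ^ (a - j - 1) / ((j : ℝ) + b - 1) *
          (((j + b - 1)! : ℝ) / ((j ! : ℝ) * (j + b - a)! * (a - 1 - j)!))) = 0 ∧
    ∀ P : Polynomial ℝ, P.degree ≤ (a - 2 : ℕ) →
      (∑ j ∈ Finset.range a,
        (-1 : ℝ) ^ j * (Nat.choose (a - 1) j : ℝ) * P.eval (j : ℝ)) = 0 := by
  have key : ∀ P : Polynomial ℝ, P.degree ≤ (a - 2 : ℕ) →
      (∑ j ∈ Finset.range a,
        (-1 : ℝ) ^ j * (Nat.choose (a - 1) j : ℝ) * P.eval (j : ℝ)) = 0 := by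
    intro P hP
    have hm : a - 1 + 1 = a := by omega
    have h21 : ((a - 2 : ℕ) : WithBot ℕ) < ((a - 1 : ℕ) : WithBot ℕ) := by
      exact_mod_cast (by omega : a - 2 < a - 1)
    have hdeg : P.degree < ((a - 1 : ℕ) : WithBot ℕ) := lt_of_le_of_lt hP h21
    have := alt_sum_poly (a - 1) P hdeg
    rwa [hm] at this
  refine ⟨?_, key⟩
  set P : Polynomial ℝ := Polynomial.C (((a-1)! : ℝ))⁻¹ *
    ∏ i ∈ Finset.range (a-2), (Polynomial.X + Polynomial.C ((b - a + i + 1 : ℕ) : ℝ)) with hPdef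
  have hndeg : P.natDegree ≤ a - 2 := by
    refine le_trans (Polynomial.natDegree_mul_le) ?_
    rw [Polynomial.natDegree_C, zero_add]
    refine le_trans (Polynomial.natDegree_prod_le _ _) ?_
    have : ∀ i ∈ Finset.range (a-2),
        (Polynomial.X + Polynomial.C ((b - a + i + 1 : ℕ) : ℝ)).natDegree = 1 :=
      fun i _ => Polynomial.natDegree_X_add_C _
    rw [Finset.sum_congr rfl this, Finset.sum_const, card_range, smul_eq_mul, mul_one]
  have hdegP : P.degree ≤ ((a - 2 : ℕ) : WithBot ℕ) :=
    le_trans Polynomial.degree_le_natDegree (by exact_mod_cast hndeg)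
  have h0 := key P hdegP
  have hfane : (((a-1)! : ℕ) : ℝ) ≠ 0 := Nat.cast_ne_zero.mpr (Nat.factorial_ne_zero _)
  have hterm : ∀ j ∈ Finset.range a,
      (-1 : ℝ) ^ (a - j - 1) / ((j : ℝ) + b - 1) *
          (((j + b - 1)! : ℝ) / ((j ! : ℝ) * (j + b - a)! * (a - 1 - j)!))
      = (-1:ℝ)^(a-1) * ((-1 : ℝ) ^ j * (Nat.choose (a - 1) j : ℝ) * P.eval (j : ℝ)) := by
    intro j hj
    have hja : j < a := Finset.mem_range.mp hj
    -- sign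
    have hsign : (-1:ℝ)^(a-j-1) = (-1:ℝ)^(a-1) * (-1:ℝ)^j := by
      have e1 : a - j - 1 + j = a - 1 := by omega
      have e2 : (-1:ℝ)^j * (-1:ℝ)^j = 1 := by
        rw [← pow_add]; exact Even.neg_one_pow ⟨j, rfl⟩
      calc (-1:ℝ)^(a-j-1) = (-1:ℝ)^(a-j-1) * ((-1:ℝ)^j * (-1:ℝ)^j) := by rw [e2, mul_one]
        _ = ((-1:ℝ)^(a-j-1) * (-1:ℝ)^j) * (-1:ℝ)^j := by ring
        _ = (-1:ℝ)^(a-1) * (-1:ℝ)^j := by rw [← pow_add, e1]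
    -- casts
    have hcast : (j : ℝ) + b - 1 = ((j + b - 1 : ℕ) : ℝ) := by
      have : (1:ℕ) ≤ j + b := by omega
      push_cast [Nat.cast_sub this]
      ring
    have hjb1ne : (((j + b - 1 : ℕ)) : ℝ) ≠ 0 := Nat.cast_ne_zero.mpr (by omega)
    have hfac : (((j + b - 1)! : ℕ) : ℝ) = ((j + b - 1 : ℕ) : ℝ) * (((j + b - 2)! : ℕ) : ℝ) := by
      rw [show j + b - 1 = (j + b - 2) + 1 by omega, Nat.factorial_succ]
      push_cast
      ring
    have hchoose : ((a-1).choose j : ℝ) = (((a-1)! : ℕ) : ℝ) / ((j ! : ℝ) * ((a-1-j)! : ℝ)) :=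
      Nat.cast_choose ℝ (by omega : j ≤ a - 1)
    -- evaluation of P
    have heval : P.eval (j : ℝ) =
        (((a-1)! : ℕ) : ℝ)⁻¹ * ((((j + b - 2)! : ℕ) : ℝ) / (((j + b - a)! : ℕ) : ℝ)) := by
      have hprodc : ∏ i ∈ Finset.range (a-2), ((j:ℝ) + ((b - a + i + 1 : ℕ) : ℝ))
          = ∏ i ∈ Finset.range (a-2), (((j + b - a : ℕ) : ℝ) + i + 1) := by
        refine Finset.prod_congr rfl fun i _ => ?_
        push_cast [Nat.cast_sub hab, Nat.cast_sub (show a ≤ j + b by omega)]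
        ring
      have hne2 : (((j + b - a)! : ℕ) : ℝ) ≠ 0 := Nat.cast_ne_zero.mpr (Nat.factorial_ne_zero _)
      have hpf := prod_fact (j + b - a) (a - 2)
      rw [show j + b - a + (a - 2) = j + b - 2 by omega] at hpf
      rw [hPdef]
      simp only [Polynomial.eval_mul, Polynomial.eval_C, Polynomial.eval_prod,
        Polynomial.eval_add, Polynomial.eval_X]
      rw [hprodc]
      congr 1
      rw [eq_div_iff hne2, mul_comm]
      exact hpf
    rw [hsign, hcast, hfac, hchoose, heval]
    have hne1 : ((j ! : ℕ) : ℝ) ≠ 0 := Nat.cast_ne_zero.mpr (Nat.factorial_ne_zero _)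
    have hne2 : (((j + b - a)! : ℕ) : ℝ) ≠ 0 := Nat.cast_ne_zero.mpr (Nat.factorial_ne_zero _)
    have hne3 : (((a - 1 - j)! : ℕ) : ℝ) ≠ 0 := Nat.cast_ne_zero.mpr (Nat.factorial_ne_zero _)
    field_simp
  rw [Finset.sum_congr rfl hterm, ← Finset.mul_sum, h0, mul_zero]
end

section
/- For natural numbers a, b ≥ 2, the classical multiple zeta values satisfy Euler's decomposition formula: ζ(a)·ζ(b) = \sum_{i=0}^{a−1} binom(i+b−1, b−1) ζ(b+i, a−i) + \sum_{j=0}^{b−1} binom(j+a−1, a−1) ζ(a+j, b−j). -/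
/-!
Multiplying the two series gives `∑_{x, y ≥ 1} 1 / (x ^ a * y ^ b)`. Iterating
`1 / (x * y) = (1 / x + 1 / y) / (x + y)` expands each term into the partial fractions
`1 / ((x + y) ^ (b + i) * x ^ (a - i))` and `1 / ((x + y) ^ (a + j) * y ^ (b - j))`, whose
coefficients obey Pascal's rule and hence are binomial. The substitution `(m₁, m₂) = (x + y, x)`
turns the sum of each partial fraction over `x, y ≥ 1` into a double zeta value; all terms are
nonnegative, so the series can be split term by term.
-/

/-- Riemann zeta value `ζ(n) = ∑_{m>0} 1/mⁿ`. -/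
noncomputable def zeta1 (n : ℕ) : ℝ := ∑' m : ℕ, 1 / ((m : ℝ) + 1) ^ n

/-- Double zeta value `ζ(a,b) = ∑_{m₁>m₂>0} 1/(m₁ᵃ m₂ᵇ)`; for `b = 0` this is
interpreted as `∑_{m₁>m₂>0} 1/m₁ᵃ`. -/
noncomputable def zeta2 (a b : ℕ) : ℝ :=
  ∑' p : ℕ × ℕ, if p.2 < p.1 ∧ 0 < p.2 then 1 / ((p.1 : ℝ) ^ a * (p.2 : ℝ) ^ b) else 0

open Finset

section PartialFractions

variable {K : Type*} [Field K]

def eulerPartialSum (a b : ℕ) (x y : K) : K :=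
  ∑ i ∈ range a, ((i + b - 1).choose (b - 1) : K) / ((x + y) ^ (b + i) * x ^ (a - i))

variable {x y : K}

theorem eulerPartialSum_succ_succ (hxy : x + y ≠ 0) (a b : ℕ) :
    eulerPartialSum (a + 1) (b + 2) x y =
      (eulerPartialSum (a + 1) (b + 1) x y + eulerPartialSum a (b + 2) x y) / (x + y) := by
  have hb₂ (i : ℕ) : i + (b + 2) - 1 = i + b + 1 := by omega
  have hb₁ (i : ℕ) : i + (b + 1) - 1 = i + b := by omega
  simp only [eulerPartialSum, Nat.add_sub_cancel, Nat.add_succ_sub_one, hb₂, hb₁, add_div, sum_div]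
  conv_lhs => simp only [Nat.choose_succ_succ', Nat.cast_add, add_div]
  rw [sum_add_distrib]
  congr 1
  · refine sum_congr rfl fun i _ => ?_
    rw [show b + 2 + i = b + 1 + i + 1 by ring, pow_succ]
    field_simp
  · rw [sum_range_succ', Nat.choose_eq_zero_of_lt (by omega : 0 + b < b + 1), Nat.cast_zero,
      zero_div, add_zero]
    refine sum_congr rfl fun i _ => ?_
    rw [show b + 2 + (i + 1) = b + 2 + i + 1 by ring, pow_succ, Nat.add_sub_add_right,
      Nat.add_right_comm]
    field_simp

theorem eulerPartialSum_succ_one (hxy : x + y ≠ 0) (a : ℕ) :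
    eulerPartialSum (a + 1) 1 x y = (eulerPartialSum a 1 x y + 1 / x ^ (a + 1)) / (x + y) := by
  simp only [eulerPartialSum, Nat.sub_self, Nat.choose_zero_right, Nat.cast_one, sum_range_succ',
    add_div, sum_div, Nat.sub_zero, add_zero, pow_one]
  congr 1
  · refine sum_congr rfl fun i _ => ?_
    rw [show 1 + (i + 1) = 1 + i + 1 by ring, pow_succ, Nat.add_sub_add_right]
    field_simp
  · field_simp

theorem one_div_pow_succ_mul_pow_succ (hx : x ≠ 0) (hy : y ≠ 0) (hxy : x + y ≠ 0) (a b : ℕ) :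
    1 / (x ^ (a + 1) * y ^ (b + 1)) =
      (1 / (x ^ a * y ^ (b + 1)) + 1 / (x ^ (a + 1) * y ^ b)) / (x + y) := by
  field_simp
  ring

theorem eulerPartialSum_zero_left (b : ℕ) : eulerPartialSum 0 b x y = 0 :=
  sum_range_zero _

theorem one_div_pow_succ_mul_pow_succ_eq_eulerPartialSum (hx : x ≠ 0) (hy : y ≠ 0)
    (hxy : x + y ≠ 0) : ∀ a b : ℕ, 1 / (x ^ (a + 1) * y ^ (b + 1)) =
      eulerPartialSum (a + 1) (b + 1) x y + eulerPartialSum (b + 1) (a + 1) y x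
  | 0, 0 => by
    rw [eulerPartialSum_succ_one hxy 0, eulerPartialSum_succ_one (add_comm x y ▸ hxy) 0,
      eulerPartialSum_zero_left, eulerPartialSum_zero_left, add_comm y x]
    field_simp
    ring
  | a + 1, 0 => by
    rw [eulerPartialSum_succ_one hxy (a + 1), eulerPartialSum_succ_succ (add_comm x y ▸ hxy) 0 a,
      one_div_pow_succ_mul_pow_succ hx hy hxy (a + 1) 0,
      one_div_pow_succ_mul_pow_succ_eq_eulerPartialSum hx hy hxy a 0,
      eulerPartialSum_zero_left, pow_zero, mul_one, add_comm y x]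
    ring
  | 0, b + 1 => by
    rw [eulerPartialSum_succ_succ hxy 0 b, eulerPartialSum_succ_one (add_comm x y ▸ hxy) (b + 1),
      one_div_pow_succ_mul_pow_succ hx hy hxy 0 (b + 1),
      one_div_pow_succ_mul_pow_succ_eq_eulerPartialSum hx hy hxy 0 b,
      eulerPartialSum_zero_left, pow_zero, one_mul, add_comm y x]
    ring
  | a + 1, b + 1 => by
    rw [eulerPartialSum_succ_succ hxy (a + 1) b,
      eulerPartialSum_succ_succ (add_comm x y ▸ hxy) (b + 1) a,
      one_div_pow_succ_mul_pow_succ hx hy hxy (a + 1) (b + 1),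
      one_div_pow_succ_mul_pow_succ_eq_eulerPartialSum hx hy hxy a (b + 1),
      one_div_pow_succ_mul_pow_succ_eq_eulerPartialSum hx hy hxy (a + 1) b, add_comm y x]
    ring

theorem one_div_pow_mul_pow_eq_eulerPartialSum (hx : x ≠ 0) (hy : y ≠ 0) (hxy : x + y ≠ 0)
    {a b : ℕ} (ha : a ≠ 0) (hb : b ≠ 0) :
    1 / (x ^ a * y ^ b) = eulerPartialSum a b x y + eulerPartialSum b a y x := by
  obtain ⟨a, rfl⟩ := Nat.exists_eq_succ_of_ne_zero ha
  obtain ⟨b, rfl⟩ := Nat.exists_eq_succ_of_ne_zero hb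
  exact one_div_pow_succ_mul_pow_succ_eq_eulerPartialSum hx hy hxy a b

theorem tsum_finsetSum_of_nonneg {ι α : Type*} {s : Finset ι} {f : ι → α → ℝ}
    (hf : ∀ i ∈ s, 0 ≤ f i) (hsum : Summable fun a => ∑ i ∈ s, f i a) :
    ∑' a, ∑ i ∈ s, f i a = ∑ i ∈ s, ∑' a, f i a :=
  Summable.tsum_finsetSum fun i hi => hsum.of_nonneg_of_le (hf i hi) fun a =>
    single_le_sum (fun j hj => hf j hj a) hi

theorem summable_one_div_nat_succ_pow {n : ℕ} (hn : 1 < n) :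
    Summable fun m : ℕ => 1 / ((m : ℝ) + 1) ^ n := by
  exact_mod_cast (summable_nat_add_iff 1).mpr (Real.summable_one_div_nat_pow.mpr hn)

theorem summable_one_div_succ_pow_mul_succ_pow {a b : ℕ} (ha : 1 < a) (hb : 1 < b) :
    Summable fun p : ℕ × ℕ => 1 / (((p.1 : ℝ) + 1) ^ a * ((p.2 : ℝ) + 1) ^ b) := by
  simpa only [one_div_mul_one_div] using
    (summable_one_div_nat_succ_pow ha).mul_of_nonneg (summable_one_div_nat_succ_pow hb)
      (fun _ => by positivity) (fun _ => by positivity)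

theorem zeta1_mul_zeta1 {a b : ℕ} (ha : 1 < a) (hb : 1 < b) :
    zeta1 a * zeta1 b = ∑' p : ℕ × ℕ, 1 / (((p.1 : ℝ) + 1) ^ a * ((p.2 : ℝ) + 1) ^ b) := by
  rw [zeta1, zeta1, (summable_one_div_nat_succ_pow ha).tsum_mul_tsum
    (summable_one_div_nat_succ_pow hb)]
  · simp only [one_div_mul_one_div]
  · simpa only [one_div_mul_one_div] using summable_one_div_succ_pow_mul_succ_pow ha hb

theorem zeta2_eq_tsum (s t : ℕ) :
    zeta2 s t =
      ∑' p : ℕ × ℕ, 1 / ((((p.1 : ℝ) + 1) + ((p.2 : ℝ) + 1)) ^ s * ((p.1 : ℝ) + 1) ^ t) := by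
  have hinj : Function.Injective fun p : ℕ × ℕ => (p.1 + p.2 + 2, p.1 + 1) := by
    rintro ⟨m, n⟩ ⟨m', n'⟩ h
    simp only [Prod.mk.injEq] at h ⊢
    omega
  rw [zeta2, ← hinj.tsum_eq]
  · refine tsum_congr fun p => ?_
    rw [if_pos (by omega)]
    push_cast
    ring_nf
  · intro q hq
    by_cases hc : q.2 < q.1 ∧ 0 < q.2
    · exact ⟨(q.2 - 1, q.1 - q.2 - 1), Prod.ext (by dsimp only; omega) (by dsimp only; omega)⟩
    · simp [hc] at hq

theorem zeta2_eq_tsum_swap (s t : ℕ) :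
    zeta2 s t =
      ∑' p : ℕ × ℕ, 1 / ((((p.2 : ℝ) + 1) + ((p.1 : ℝ) + 1)) ^ s * ((p.2 : ℝ) + 1) ^ t) := by
  rw [zeta2_eq_tsum, ← (Equiv.prodComm ℕ ℕ).tsum_eq]
  rfl

/-- Euler's decomposition formula for classical double zeta values. -/
theorem euler_decomposition (a b : ℕ) (ha : 2 ≤ a) (hb : 2 ≤ b) :
    zeta1 a * zeta1 b =
      (∑ i ∈ Finset.range a, (Nat.choose (i + b - 1) (b - 1) : ℝ) * zeta2 (b + i) (a - i))
        + ∑ j ∈ Finset.range b, (Nat.choose (j + a - 1) (a - 1) : ℝ) * zeta2 (a + j) (b - j) := by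
  let x : ℕ × ℕ → ℝ := fun p => p.1 + 1
  let y : ℕ × ℕ → ℝ := fun p => p.2 + 1
  -- both families of partial fractions, indexed together so that the series splits in one step
  let T : ℕ ⊕ ℕ → ℕ × ℕ → ℝ := Sum.elim
    (fun i p => (i + b - 1).choose (b - 1) * (1 / ((x p + y p) ^ (b + i) * x p ^ (a - i))))
    (fun j p => (j + a - 1).choose (a - 1) * (1 / ((y p + x p) ^ (a + j) * y p ^ (b - j))))
  have hT (p : ℕ × ℕ) : 1 / (x p ^ a * y p ^ b) = ∑ k ∈ (range a).disjSum (range b), T k p := by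
    rw [sum_disjSum]
    simp only [T, Sum.elim_inl, Sum.elim_inr, mul_one_div]
    exact one_div_pow_mul_pow_eq_eulerPartialSum (by positivity) (by positivity) (by positivity)
      (by omega) (by omega)
  have hT_nonneg : ∀ k ∈ (range a).disjSum (range b), 0 ≤ T k := by
    rintro (i | j) _ p <;> dsimp only [T, Sum.elim_inl, Sum.elim_inr] <;> positivity
  calc zeta1 a * zeta1 b = ∑' p, 1 / (x p ^ a * y p ^ b) := zeta1_mul_zeta1 ha hb
    _ = ∑' p, ∑ k ∈ (range a).disjSum (range b), T k p := tsum_congr hT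
    _ = ∑ k ∈ (range a).disjSum (range b), ∑' p, T k p :=
      tsum_finsetSum_of_nonneg hT_nonneg
        ((summable_one_div_succ_pow_mul_succ_pow ha hb).congr hT)
    _ = _ := by
      simp only [sum_disjSum, T, Sum.elim_inl, Sum.elim_inr, tsum_mul_left, x, y,
        ← zeta2_eq_tsum, ← zeta2_eq_tsum_swap]
end PartialFractions
end
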